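/- Consider an object-oriented FMDP with independent transitions whose transition kernel T satisfies causation symmetry. Let O_a, O_b be instances of a common class with field U, and let O_i be an object with i ≠ a and i ≠ b, with state field V. Let p be a full-support joint probability mass function on (S, A, S') consistent with T, and let q be the joint probability mass function whose current-step marginal is q(current = w) := p(current = σ_{ab}(w)) and which is consistent with the same transition kernel T. If the conditional independence O_a.U ⊥_p O_i.V' | ((S, A) \ {O_a.U}) holds, then O_b.U ⊥_q O_i.V' | ((S, A) \ {O_b.U}) holds. -/

import Mathlib

open Finset

noncomputable section

/-- Marginal probability that a configuration agrees with `x` on the coordinates in `E`. -/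
def marg {V : Type*} [Fintype V] [DecidableEq V] {val : V → Type*}
    [∀ v, Fintype (val v)] [∀ v, DecidableEq (val v)]
    (p : (∀ v, val v) → ℝ) (E : Finset V) (x : ∀ v, val v) : ℝ :=
  ∑ y : ∀ v, val v, if ∀ v ∈ E, y v = x v then p y else 0

/-- Conditional probability of the value of coordinate `v` given the values of `P`. -/
def condP {V : Type*} [Fintype V] [DecidableEq V] {val : V → Type*}
    [∀ v, Fintype (val v)] [∀ v, DecidableEq (val v)]
    (p : (∀ v, val v) → ℝ) (v : V) (P : Finset V) (x : ∀ v, val v) : ℝ :=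
  marg p (insert v P) x / marg p P x

/-- Conditional independence X ⊥ Y | Z, in cross-multiplied form. -/
def CondIndep {V : Type*} [Fintype V] [DecidableEq V] {val : V → Type*}
    [∀ v, Fintype (val v)] [∀ v, DecidableEq (val v)]
    (p : (∀ v, val v) → ℝ) (X Y Z : Finset V) : Prop :=
  ∀ x : ∀ v, val v,
    marg p (X ∪ Y ∪ Z) x * marg p Z x = marg p (X ∪ Z) x * marg p (Y ∪ Z) x

/-- Variables of an FMDP: states, actions, next states. -/
abbrev FVar (ns na : ℕ) := Fin ns ⊕ (Fin na ⊕ Fin ns)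

/-- Value types of FMDP variables. -/
def fv {ns na : ℕ} (Sv : Fin ns → Type) (Av : Fin na → Type) : FVar ns na → Type :=
  Sum.elim Sv (Sum.elim Av Sv)

instance {ns na : ℕ} (Sv : Fin ns → Type) (Av : Fin na → Type)
    [∀ i, Fintype (Sv i)] [∀ j, Fintype (Av j)] : ∀ v, Fintype (fv Sv Av v)
  | .inl i => inferInstanceAs (Fintype (Sv i))
  | .inr (.inl j) => inferInstanceAs (Fintype (Av j))
  | .inr (.inr k) => inferInstanceAs (Fintype (Sv k))

instance {ns na : ℕ} (Sv : Fin ns → Type) (Av : Fin na → Type)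
    [∀ i, DecidableEq (Sv i)] [∀ j, DecidableEq (Av j)] : ∀ v, DecidableEq (fv Sv Av v)
  | .inl i => inferInstanceAs (DecidableEq (Sv i))
  | .inr (.inl j) => inferInstanceAs (DecidableEq (Av j))
  | .inr (.inr k) => inferInstanceAs (DecidableEq (Sv k))

/-- The set of current-step coordinates. -/
def curSet (ns na : ℕ) : Finset (FVar ns na) :=
  (Finset.univ.image (Sum.inl : Fin ns → FVar ns na)) ∪
    (Finset.univ.image (fun j : Fin na => (Sum.inr (Sum.inl j) : FVar ns na)))

/-- A joint pmf `p` on (S, A, S') is consistent with the transition kernel `T`. -/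
def FConsistent {ns na : ℕ} {Sv : Fin ns → Type} {Av : Fin na → Type}
    [∀ i, Fintype (Sv i)] [∀ j, Fintype (Av j)]
    [∀ i, DecidableEq (Sv i)] [∀ j, DecidableEq (Av j)]
    (p : (∀ v, fv Sv Av v) → ℝ)
    (T : (∀ i, Sv i) → (∀ j, Av j) → (∀ k, Sv k) → ℝ) : Prop :=
  ∀ x, p x = marg p (curSet ns na) x *
    T (fun i => x (.inl i)) (fun j => x (.inr (.inl j))) (fun k => x (.inr (.inr k)))

/-- The specification of an object-oriented FMDP: `K` classes, class `k` having `Nk k`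
instances, state fields `SF k` and action fields `AF k`, with finite nonempty value types. -/
structure OOSpec where
  K : ℕ
  Nk : Fin K → ℕ
  SF : Fin K → Type
  AF : Fin K → Type
  SVal : ∀ k, SF k → Type
  AVal : ∀ k, AF k → Type
  finSF : ∀ k, Fintype (SF k)
  finAF : ∀ k, Fintype (AF k)
  deqSF : ∀ k, DecidableEq (SF k)
  deqAF : ∀ k, DecidableEq (AF k)
  finSVal : ∀ k u, Fintype (SVal k u)
  finAVal : ∀ k v, Fintype (AVal k v)
  deqSVal : ∀ k u, DecidableEq (SVal k u)
  deqAVal : ∀ k v, DecidableEq (AVal k v)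
  neSVal : ∀ k u, Nonempty (SVal k u)
  neAVal : ∀ k v, Nonempty (AVal k v)

attribute [instance] OOSpec.finSF OOSpec.finAF OOSpec.deqSF OOSpec.deqAF
  OOSpec.finSVal OOSpec.finAVal OOSpec.deqSVal OOSpec.deqAVal
  OOSpec.neSVal OOSpec.neAVal

namespace OOSpec

variable (σ : OOSpec)

/-- Objects: the `m`-th instance of class `k`. -/
abbrev ObjIdx := Σ k : Fin σ.K, Fin (σ.Nk k)

/-- The fields of class `k`: state fields and action fields. -/
abbrev Fd (k : Fin σ.K) := σ.SF k ⊕ σ.AF k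

/-- Value type of each field of class `k`. -/
def fval (k : Fin σ.K) : σ.Fd k → Type := Sum.elim (σ.SVal k) (σ.AVal k)

instance (k : Fin σ.K) : ∀ f : σ.Fd k, Fintype (σ.fval k f)
  | .inl u => inferInstanceAs (Fintype (σ.SVal k u))
  | .inr v => inferInstanceAs (Fintype (σ.AVal k v))

instance (k : Fin σ.K) : ∀ f : σ.Fd k, DecidableEq (σ.fval k f)
  | .inl u => inferInstanceAs (DecidableEq (σ.SVal k u))
  | .inr v => inferInstanceAs (DecidableEq (σ.AVal k v))

/-- The attribute tuple of an instance of class `k`. -/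
abbrev Obj (k : Fin σ.K) := ∀ f : σ.Fd k, σ.fval k f

/-- Current configurations: an attribute tuple for every object. -/
abbrev Cur := ∀ o : σ.ObjIdx, σ.Obj o.1

/-- Next-step configurations: values of all next-step state attributes. -/
abbrev Nxt := ∀ o : σ.ObjIdx, ∀ u : σ.SF o.1, σ.SVal o.1 u

theorem fst_swap (a b o : σ.ObjIdx) (h : a.1 = b.1) :
    (Equiv.swap a b o).1 = o.1 := by
  rcases eq_or_ne o a with rfl | ha
  · rw [Equiv.swap_apply_left]; exact h.symm
  · rcases eq_or_ne o b with rfl | hb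
    · rw [Equiv.swap_apply_right]; exact h
    · rw [Equiv.swap_apply_of_ne_of_ne ha hb]

/-- The involution σ_{ab} on current configurations exchanging the attribute tuples of
two instances `a` and `b` of a common class. -/
def swapCur (a b : σ.ObjIdx) (h : a.1 = b.1) (w : σ.Cur) : σ.Cur :=
  fun o => cast (congrArg σ.Obj (σ.fst_swap a b o h)) (w (Equiv.swap a b o))

/-- The conditional law, under `T`, of object `o`'s next-step state attributes at `w`. -/
def objLaw (T : σ.Cur → σ.Nxt → ℝ) (o : σ.ObjIdx) (w : σ.Cur)
    (y : ∀ u : σ.SF o.1, σ.SVal o.1 u) : ℝ :=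
  ∑ x' : σ.Nxt, if x' o = y then T w x' else 0

/-- The marginal of `T(· | w)` on the single next-step coordinate `O_o.u'`
(the coordinate kernel `T_{o,u}`). -/
def coordKer (T : σ.Cur → σ.Nxt → ℝ) (o : σ.ObjIdx) (u : σ.SF o.1) (w : σ.Cur)
    (y : σ.SVal o.1 u) : ℝ :=
  ∑ x' : σ.Nxt, if x' o u = y then T w x' else 0

/-- `T` has independent transitions: it factorizes over the next-step coordinates as the
product of its coordinate kernels. -/
def IndepTrans (T : σ.Cur → σ.Nxt → ℝ) : Prop :=
  ∀ (w : σ.Cur) (x' : σ.Nxt),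
    T w x' = ∏ ou : Σ o : σ.ObjIdx, σ.SF o.1, σ.coordKer T ou.1 ou.2 w (x' ou.1 ou.2)

/-- A function of the current configuration depends on the current-step coordinate
`O_j.f`: it takes different values at two configurations differing only in that coordinate. -/
def DependsOn {α : Type*} (κ : σ.Cur → α) (j : σ.ObjIdx) (f : σ.Fd j.1) : Prop :=
  ∃ w w' : σ.Cur,
    (∀ (o : σ.ObjIdx) (g : σ.Fd o.1),
      (⟨o, g⟩ : Σ o : σ.ObjIdx, σ.Fd o.1) ≠ ⟨j, f⟩ → w o g = w' o g) ∧ κ w ≠ κ w'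

/-- Result symmetry: instances of a common class transit by the same rule. -/
def ResultSym (T : σ.Cur → σ.Nxt → ℝ) : Prop :=
  ∀ (k : Fin σ.K) (m m' : Fin (σ.Nk k)) (w : σ.Cur) (y : ∀ u : σ.SF k, σ.SVal k u),
    σ.objLaw T ⟨k, m⟩ w y = σ.objLaw T ⟨k, m'⟩ (σ.swapCur ⟨k, m⟩ ⟨k, m'⟩ rfl w) y

/-- Causation symmetry: two other instances of a common class are interchangeable for the
transition of any object. -/
def CausSym (T : σ.Cur → σ.Nxt → ℝ) : Prop :=
  ∀ (i : σ.ObjIdx) (k : Fin σ.K) (m m' : Fin (σ.Nk k)),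
    (⟨k, m⟩ : σ.ObjIdx) ≠ i → (⟨k, m'⟩ : σ.ObjIdx) ≠ i →
    ∀ (w : σ.Cur) (y : ∀ u : σ.SF i.1, σ.SVal i.1 u),
      σ.objLaw T i w y = σ.objLaw T i (σ.swapCur ⟨k, m⟩ ⟨k, m'⟩ rfl w) y

end OOSpec

namespace OOSpec

variable (σ : OOSpec)

/-- Current-step coordinates: the attribute `O_o.f`. -/
abbrev CurV := Σ o : σ.ObjIdx, σ.Fd o.1

/-- Next-step coordinates: the attribute `O_o.u'`. -/
abbrev NxtV := Σ o : σ.ObjIdx, σ.SF o.1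

/-- All variables of the OO-FMDP. -/
abbrev Var := σ.CurV ⊕ σ.NxtV

/-- Value type of each variable. -/
def vval : σ.Var → Type
  | .inl v => σ.fval v.1.1 v.2
  | .inr v => σ.SVal v.1.1 v.2

instance : ∀ v : σ.Var, Fintype (σ.vval v)
  | .inl v => inferInstanceAs (Fintype (σ.fval v.1.1 v.2))
  | .inr v => inferInstanceAs (Fintype (σ.SVal v.1.1 v.2))

instance : ∀ v : σ.Var, DecidableEq (σ.vval v)
  | .inl v => inferInstanceAs (DecidableEq (σ.fval v.1.1 v.2))
  | .inr v => inferInstanceAs (DecidableEq (σ.SVal v.1.1 v.2))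

/-- Full configurations of all variables. -/
abbrev Cfg := ∀ v : σ.Var, σ.vval v

/-- The current configuration determined by a full configuration. -/
def curOf (d : σ.Cfg) : σ.Cur := fun o f => d (.inl ⟨o, f⟩)

/-- The next-step configuration determined by a full configuration. -/
def nxtOf (d : σ.Cfg) : σ.Nxt := fun o u => d (.inr ⟨o, u⟩)

/-- Building a full configuration from a current and a next configuration. -/
def mkCfg (w : σ.Cur) (x' : σ.Nxt) : σ.Cfg
  | .inl v => w v.1 v.2
  | .inr v => x' v.1 v.2

/-- The set of all current-step coordinates. -/
def curVars : Finset σ.Var := Finset.univ.image Sum.inl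

/-- A joint pmf on (S, A, S') is consistent with the transition kernel `T`. -/
def Consistent (p : σ.Cfg → ℝ) (T : σ.Cur → σ.Nxt → ℝ) : Prop :=
  ∀ d : σ.Cfg, p d = marg p σ.curVars d * T (σ.curOf d) (σ.nxtOf d)

end OOSpec

/-!
For `p` consistent with `T`, the conditional independence `O.U ⊥ O_i.V' | (S, A) \ {O.U}`
reads: at every configuration the coordinate kernel `T_{i,V}` equals its `p`-weighted mean over
the values of `O.U` with everything else fixed. Under full support this forces `T_{i,V}` not to
depend on `O.U`, and conversely such independence gives the conditional independence for every
pmf consistent with `T`. Causation symmetry makes `T_{i,V}` invariant under `σ_{ab}`, so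
independence of `O_a.U` turns into independence of `O_b.U`.
-/

section Marginal

variable {V : Type*} [Fintype V] [DecidableEq V] {val : V → Type*}
  [∀ v, Fintype (val v)] [∀ v, DecidableEq (val v)] {p : (∀ v, val v) → ℝ}

theorem marg_congr {E : Finset V} {x x' : ∀ v, val v} (h : ∀ v ∈ E, x v = x' v) :
    marg p E x = marg p E x' :=
  Finset.sum_congr rfl fun y _ => if_congr (forall₂_congr fun v hv => by rw [h v hv]) rfl rfl

theorem marg_pos (hp : ∀ y, 0 < p y) (E : Finset V) (x : ∀ v, val v) : 0 < marg p E x :=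
  Finset.sum_pos' (fun y _ => by split_ifs <;> simp [(hp y).le])
    ⟨x, mem_univ x, by simp [hp x]⟩

theorem marg_sdiff_singleton {F : Finset V} {c : V} (hc : c ∈ F) (x : ∀ v, val v) :
    marg p (F \ {c}) x = ∑ u : val c, marg p F (Function.update x c u) := by
  unfold marg
  rw [Finset.sum_comm]
  refine Finset.sum_congr rfl fun y _ => ?_
  have hcond : ∀ u : val c, (∀ v ∈ F, y v = Function.update x c u v) ↔
      (y c = u ∧ ∀ v ∈ F \ {c}, y v = x v) := by
    intro u
    constructor
    · intro h
      refine ⟨by simpa using h c hc, fun v hv => ?_⟩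
      rw [Finset.mem_sdiff, Finset.mem_singleton] at hv
      simpa [hv.2] using h v hv.1
    · rintro ⟨rfl, h⟩ v hv
      by_cases hvc : v = c
      · subst hvc; simp
      · simpa [hvc] using h v (by simp [hv, hvc])
  simp_rw [hcond, ite_and, Finset.sum_ite_eq, if_pos (mem_univ _)]

variable {F : Finset V} {c y : V} {g : (∀ v, val v) → ℝ}

theorem condIndep_iff_of_factor (hc : c ∈ F) (hcy : c ≠ y)
    (hg : ∀ x, marg p (insert y F) x = marg p F x * g x) :
    CondIndep p {c} {y} (F \ {c}) ↔ ∀ x,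
      marg p F x * g x * ∑ u : val c, marg p F (Function.update x c u)
        = marg p F x *
          ∑ u : val c, marg p F (Function.update x c u) * g (Function.update x c u) := by
  have hXYZ : {c} ∪ {y} ∪ (F \ {c}) = insert y F := by
    ext v; by_cases v = c <;> simp_all
  have hXZ : {c} ∪ (F \ {c}) = F := by
    ext v; by_cases v = c <;> simp_all
  have hYZ : {y} ∪ (F \ {c}) = insert y F \ {c} := by
    ext v; by_cases v = c <;> simp_all
  refine forall_congr' fun x => ?_
  simp_rw [hXYZ, hXZ, hYZ, marg_sdiff_singleton hc, marg_sdiff_singleton (mem_insert_of_mem hc),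
    hg]

theorem condIndep_of_factor_update_eq (hc : c ∈ F) (hcy : c ≠ y)
    (hg : ∀ x, marg p (insert y F) x = marg p F x * g x)
    (hinv : ∀ x u, g (Function.update x c u) = g x) :
    CondIndep p {c} {y} (F \ {c}) :=
  (condIndep_iff_of_factor hc hcy hg).2 fun x => by
    simp_rw [hinv x, ← Finset.sum_mul]
    ring

theorem factor_update_eq_of_condIndep (hp : ∀ x, 0 < p x) (hc : c ∈ F) (hcy : c ≠ y)
    (hg : ∀ x, marg p (insert y F) x = marg p F x * g x) (hci : CondIndep p {c} {y} (F \ {c}))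
    (x : ∀ v, val v) (u : val c) : g (Function.update x c u) = g x := by
  -- `g z` is the `marg p F`-weighted mean of `g` over the `c`-fibre through `z`,
  -- and `x` and `Function.update x c u` lie in the same fibre.
  have hmean : ∀ z, g z * ∑ w : val c, marg p F (Function.update z c w)
      = ∑ w : val c, marg p F (Function.update z c w) * g (Function.update z c w) := fun z =>
    mul_left_cancel₀ (marg_pos hp F z).ne' <| by
      rw [← mul_assoc]; exact (condIndep_iff_of_factor hc hcy hg).1 hci z
  have hmass : 0 < ∑ w : val c, marg p F (Function.update x c w) :=
    Finset.sum_pos (fun w _ => marg_pos hp F _) ⟨u, mem_univ u⟩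
  have hu := hmean (Function.update x c u)
  simp only [Function.update_idem] at hu
  exact mul_right_cancel₀ hmass.ne' (hu.trans (hmean x).symm)

end Marginal

namespace OOSpec

variable {σ : OOSpec} {T : σ.Cur → σ.Nxt → ℝ}

def cfgEquiv (σ : OOSpec) : σ.Cfg ≃ σ.Cur × σ.Nxt where
  toFun d := (σ.curOf d, σ.nxtOf d)
  invFun wx := σ.mkCfg wx.1 wx.2
  left_inv d := by funext v; cases v <;> rfl
  right_inv wx := rfl

theorem sum_cfg_eq_sum_sum {M : Type*} [AddCommMonoid M] (f : σ.Cur → σ.Nxt → M) :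
    ∑ d : σ.Cfg, f (σ.curOf d) (σ.nxtOf d) = ∑ w, ∑ x', f w x' :=
  (σ.cfgEquiv.sum_comp fun wx => f wx.1 wx.2).trans (Fintype.sum_prod_type _)

theorem mem_curVars (z : σ.CurV) : (Sum.inl z : σ.Var) ∈ σ.curVars :=
  mem_image_of_mem _ (mem_univ z)

theorem forall_mem_curVars_iff {x y : σ.Cfg} :
    (∀ v ∈ σ.curVars, y v = x v) ↔ σ.curOf y = σ.curOf x := by
  simp only [curVars, mem_image, mem_univ, true_and, forall_exists_index, forall_apply_eq_imp_iff]
  exact ⟨fun h => funext fun o => funext fun f => h ⟨o, f⟩,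
    fun h z => congrFun (congrFun h z.1) z.2⟩

theorem Consistent.marg_insert_nxt {p : σ.Cfg → ℝ} (hp : σ.Consistent p T) (i : σ.ObjIdx)
    (V : σ.SF i.1) (x : σ.Cfg) :
    marg p (insert (Sum.inr ⟨i, V⟩) σ.curVars) x
      = marg p σ.curVars x * σ.coordKer T i V (σ.curOf x) (σ.nxtOf x i V) := by
  have hsum : marg p (insert (Sum.inr ⟨i, V⟩) σ.curVars) x
      = ∑ w, ∑ x', if w = σ.curOf x then
          if x' i V = σ.nxtOf x i V then marg p σ.curVars x * T w x' else 0 else 0 := by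
    rw [← sum_cfg_eq_sum_sum]
    refine Finset.sum_congr rfl fun d _ => ?_
    have hcond : (∀ v ∈ insert (Sum.inr ⟨i, V⟩ : σ.Var) σ.curVars, d v = x v)
        ↔ σ.curOf d = σ.curOf x ∧ σ.nxtOf d i V = σ.nxtOf x i V := by
      rw [forall_mem_insert, forall_mem_curVars_iff, and_comm]; rfl
    simp_rw [hcond, ite_and]
    by_cases hcur : σ.curOf d = σ.curOf x
    · rw [if_pos hcur, if_pos hcur, hp d, marg_congr (forall_mem_curVars_iff.2 hcur)]
    · rw [if_neg hcur, if_neg hcur]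
  rw [hsum, Finset.sum_comm]
  simp only [Finset.sum_ite_eq', mem_univ, if_true, coordKer, Finset.mul_sum, mul_ite, mul_zero]

theorem coordKer_eq_sum_objLaw (i : σ.ObjIdx) (V : σ.SF i.1) (w : σ.Cur) (c : σ.SVal i.1 V) :
    σ.coordKer T i V w c
      = ∑ y : (∀ u : σ.SF i.1, σ.SVal i.1 u), if y V = c then σ.objLaw T i w y else 0 := by
  unfold coordKer objLaw
  rw [← Finset.sum_fiberwise univ (fun x' : σ.Nxt => x' i)]
  refine Finset.sum_congr rfl fun y _ => ?_
  rw [Finset.sum_filter]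
  by_cases hy : y V = c
  · rw [if_pos hy]
    exact Finset.sum_congr rfl fun x' _ => by split_ifs with h <;> simp_all
  · rw [if_neg hy]
    exact Finset.sum_eq_zero fun x' _ => by split_ifs with h <;> simp_all

theorem swapCur_apply_left (l : Fin σ.K) (ma mb : Fin (σ.Nk l)) (w : σ.Cur) :
    σ.swapCur ⟨l, ma⟩ ⟨l, mb⟩ rfl w ⟨l, ma⟩ = w ⟨l, mb⟩ :=
  cast_eq_iff_heq.2 (congr_arg_heq w (Equiv.swap_apply_left _ _))

theorem swapCur_apply_right (l : Fin σ.K) (ma mb : Fin (σ.Nk l)) (w : σ.Cur) :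
    σ.swapCur ⟨l, ma⟩ ⟨l, mb⟩ rfl w ⟨l, mb⟩ = w ⟨l, ma⟩ :=
  cast_eq_iff_heq.2 (congr_arg_heq w (Equiv.swap_apply_right _ _))

theorem swapCur_apply_of_ne {l : Fin σ.K} {ma mb : Fin (σ.Nk l)} (w : σ.Cur) {o : σ.ObjIdx}
    (ha : o ≠ ⟨l, ma⟩) (hb : o ≠ ⟨l, mb⟩) : σ.swapCur ⟨l, ma⟩ ⟨l, mb⟩ rfl w o = w o :=
  cast_eq_iff_heq.2 (congr_arg_heq w (Equiv.swap_apply_of_ne_of_ne ha hb))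

theorem CausSym.coordKer_swapCur (hcaus : σ.CausSym T) {l : Fin σ.K} {ma mb : Fin (σ.Nk l)}
    {i : σ.ObjIdx} (hai : (⟨l, ma⟩ : σ.ObjIdx) ≠ i) (hbi : (⟨l, mb⟩ : σ.ObjIdx) ≠ i)
    (V : σ.SF i.1) (w : σ.Cur) :
    σ.coordKer T i V (σ.swapCur ⟨l, ma⟩ ⟨l, mb⟩ rfl w) = σ.coordKer T i V w := by
  funext c
  simp only [coordKer_eq_sum_objLaw, ← hcaus i l ma mb hai hbi w]

theorem not_dependsOn_of_swapCur_invariant {α : Type*} {κ : σ.Cur → α} {l : Fin σ.K}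
    {ma mb : Fin (σ.Nk l)} {U : σ.Fd l}
    (hκ : ∀ w, κ (σ.swapCur ⟨l, ma⟩ ⟨l, mb⟩ rfl w) = κ w) (ha : ¬ σ.DependsOn κ ⟨l, ma⟩ U) :
    ¬ σ.DependsOn κ ⟨l, mb⟩ U := by
  rintro ⟨w, w', hww', hne⟩
  refine ha ⟨σ.swapCur ⟨l, ma⟩ ⟨l, mb⟩ rfl w, σ.swapCur ⟨l, ma⟩ ⟨l, mb⟩ rfl w', fun o g hog => ?_,
    by rwa [hκ, hκ]⟩
  rcases eq_or_ne o ⟨l, ma⟩ with rfl | hoa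
  · have hgU : g ≠ U := by rintro rfl; exact hog rfl
    simp only [swapCur_apply_left]
    exact hww' ⟨l, mb⟩ g (by simpa using hgU)
  rcases eq_or_ne o ⟨l, mb⟩ with rfl | hob
  · simp only [swapCur_apply_right]
    exact hww' ⟨l, ma⟩ g fun h => hoa (congrArg Sigma.fst h).symm
  · simp only [swapCur_apply_of_ne w hoa hob, swapCur_apply_of_ne w' hoa hob]
    exact hww' o g fun h => hob (congrArg Sigma.fst h)

theorem curOf_update_inl_of_ne (x : σ.Cfg) {j : σ.ObjIdx} {f : σ.Fd j.1} (u : σ.fval j.1 f)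
    {o : σ.ObjIdx} {g : σ.Fd o.1} (h : (⟨o, g⟩ : σ.CurV) ≠ ⟨j, f⟩) :
    σ.curOf (Function.update x (Sum.inl ⟨j, f⟩) u) o g = σ.curOf x o g :=
  Function.update_of_ne (Sum.inl_injective.ne h) _ _

theorem nxtOf_update_inl (x : σ.Cfg) (c : σ.CurV) (u : σ.vval (Sum.inl c)) (o : σ.ObjIdx)
    (v : σ.SF o.1) : σ.nxtOf (Function.update x (Sum.inl c) u) o v = σ.nxtOf x o v :=
  Function.update_of_ne Sum.inr_ne_inl _ _

theorem Consistent.condIndep_of_not_dependsOn {q : σ.Cfg → ℝ} (hq : σ.Consistent q T)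
    {i : σ.ObjIdx} {V : σ.SF i.1} {j : σ.ObjIdx} {f : σ.Fd j.1}
    (h : ¬ σ.DependsOn (σ.coordKer T i V) j f) :
    CondIndep q {Sum.inl ⟨j, f⟩} {Sum.inr ⟨i, V⟩} (σ.curVars \ {Sum.inl ⟨j, f⟩}) :=
  condIndep_of_factor_update_eq (mem_curVars _) Sum.inl_ne_inr (hq.marg_insert_nxt i V)
    fun x u => by
      have hker : σ.coordKer T i V (σ.curOf (Function.update x (Sum.inl ⟨j, f⟩) u))
          = σ.coordKer T i V (σ.curOf x) :=
        by_contra fun hne => h ⟨_, _, fun o g hog => curOf_update_inl_of_ne x u hog, hne⟩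
      rw [nxtOf_update_inl, hker]

theorem Consistent.not_dependsOn_of_condIndep {p : σ.Cfg → ℝ} (hp : σ.Consistent p T)
    (hpos : ∀ d, 0 < p d) {i : σ.ObjIdx} {V : σ.SF i.1} {j : σ.ObjIdx} {f : σ.Fd j.1}
    (hci : CondIndep p {Sum.inl ⟨j, f⟩} {Sum.inr ⟨i, V⟩} (σ.curVars \ {Sum.inl ⟨j, f⟩})) :
    ¬ σ.DependsOn (σ.coordKer T i V) j f := by
  rintro ⟨w, w', hww', hne⟩
  refine hne (funext fun c => ?_)
  obtain ⟨x, hx_cur, hx_nxt⟩ : ∃ x : σ.Cfg, σ.curOf x = w ∧ σ.nxtOf x i V = c :=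
    ⟨Function.update (σ.mkCfg w (Classical.arbitrary _)) (Sum.inr ⟨i, V⟩) c,
      funext fun _ => funext fun _ => Function.update_of_ne Sum.inl_ne_inr _ _,
      Function.update_self _ _ _⟩
  have hx'_cur : σ.curOf (Function.update x (Sum.inl ⟨j, f⟩) (w' j f)) = w' := by
    funext o g
    by_cases hog : (⟨o, g⟩ : σ.CurV) = ⟨j, f⟩
    · cases hog
      exact Function.update_self _ _ _
    · rw [curOf_update_inl_of_ne x _ hog, hx_cur]
      exact hww' o g hog
  have hinv := factor_update_eq_of_condIndep hpos (mem_curVars _) Sum.inl_ne_inr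
    (hp.marg_insert_nxt i V) hci x (w' j f)
  rw [nxtOf_update_inl x ⟨j, f⟩ (w' j f) i V, hx_cur, hx_nxt, hx'_cur] at hinv
  exact hinv.symm

end OOSpec

open OOSpec in
theorem oo_fmdp_global_ci_transfers_by_causation_symmetry_general
    (σ : OOSpec) (T : σ.Cur → σ.Nxt → ℝ)
    (hcaus : σ.CausSym T)
    (l : Fin σ.K) (ma mb : Fin (σ.Nk l)) (U : σ.Fd l)
    (i : σ.ObjIdx) (V : σ.SF i.1)
    (hai : (⟨l, ma⟩ : σ.ObjIdx) ≠ i) (hbi : (⟨l, mb⟩ : σ.ObjIdx) ≠ i)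
    (p q : σ.Cfg → ℝ)
    (hppos : ∀ d, 0 < p d) (hpcons : σ.Consistent p T)
    (hqcons : σ.Consistent q T)
    (hci : CondIndep p {Sum.inl ⟨⟨l, ma⟩, U⟩} {Sum.inr ⟨i, V⟩}
      (σ.curVars \ {Sum.inl ⟨⟨l, ma⟩, U⟩})) :
    CondIndep q {Sum.inl ⟨⟨l, mb⟩, U⟩} {Sum.inr ⟨i, V⟩}
      (σ.curVars \ {Sum.inl ⟨⟨l, mb⟩, U⟩}) := by
  have ha : ¬ σ.DependsOn (σ.coordKer T i V) ⟨l, ma⟩ U :=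
    hpcons.not_dependsOn_of_condIndep hppos hci
  have hb : ¬ σ.DependsOn (σ.coordKer T i V) ⟨l, mb⟩ U :=
    not_dependsOn_of_swapCur_invariant (hcaus.coordKer_swapCur hai hbi V) ha
  exact hqcons.condIndep_of_not_dependsOn hb

open OOSpec in
/-- In an OO-FMDP with independent transitions and causation symmetry, if
`q` is the joint pmf whose current-step marginal is the σ_{ab}-pushforward of that of `p`
and which is consistent with the same kernel, then for an object `i` distinct from `a` and
`b`, the conditional independence O_a.U ⊥_p O_i.V' | ((S,A) \ {O_a.U}) transfers to
O_b.U ⊥_q O_i.V' | ((S,A) \ {O_b.U}). -/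
theorem oo_fmdp_global_ci_transfers_by_causation_symmetry
    (σ : OOSpec) (T : σ.Cur → σ.Nxt → ℝ)
    (hT0 : ∀ w x', 0 ≤ T w x') (hT1 : ∀ w, ∑ x', T w x' = 1)
    (hind : σ.IndepTrans T) (hcaus : σ.CausSym T)
    (l : Fin σ.K) (ma mb : Fin (σ.Nk l)) (U : σ.Fd l)
    (i : σ.ObjIdx) (V : σ.SF i.1)
    (hai : (⟨l, ma⟩ : σ.ObjIdx) ≠ i) (hbi : (⟨l, mb⟩ : σ.ObjIdx) ≠ i)
    (p q : σ.Cfg → ℝ)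
    (hppos : ∀ d, 0 < p d) (hpsum : ∑ d, p d = 1) (hpcons : σ.Consistent p T)
    (hqcons : σ.Consistent q T)
    -- q(current = w) = p(current = σ_{ab}(w))
    (hqmarg : ∀ d : σ.Cfg, marg q σ.curVars d =
      marg p σ.curVars (σ.mkCfg (σ.swapCur ⟨l, ma⟩ ⟨l, mb⟩ rfl (σ.curOf d)) (σ.nxtOf d)))
    (hci : CondIndep p {Sum.inl ⟨⟨l, ma⟩, U⟩} {Sum.inr ⟨i, V⟩}
      (σ.curVars \ {Sum.inl ⟨⟨l, ma⟩, U⟩})) :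
    CondIndep q {Sum.inl ⟨⟨l, mb⟩, U⟩} {Sum.inr ⟨i, V⟩}
      (σ.curVars \ {Sum.inl ⟨⟨l, mb⟩, U⟩}) :=
  oo_fmdp_global_ci_transfers_by_causation_symmetry_general σ T hcaus l ma mb U i V hai hbi p q
    hppos hpcons hqcons hci
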